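/- arXiv:2304.13200 — 2 statements merged into one kernel-verified Lean document; each statement's English description precedes it below -/
import Mathlib

section
/- Consider the semidefinite program for Alice's cheating in the stochastic switch between XOR oblivious transfer and three-outcome die rolling: maximize (1/2)·⟨σ^{OT}, P_accept⟩ + (1/2)·(1/3)·Σ_{y∈{0,1,2}} ⟨φ_y|σ_y^{DR}|φ_y⟩ over density matrices σ^{OT} on (ℂ²)^{⊗4}, σ_B on ℂ³, and σ₀^{DR}, σ₁^{DR}, σ₂^{DR} on ℂ³ ⊗ ℂ³, subject to: Tr_{G₀,G₁}(σ^{OT}) = Tr_B(U₂(|ψ⟩⟨ψ| ⊗ σ_B)U₂†) and Tr_A(σ_y^{DR}) = σ_B for all y ∈ {0,1,2}, where |ψ⟩ = (1/2)Σ_{x₀,x₁}|x₀x₁⟩, U₂ = Σ_{x₀,x₁}|x₀x₁⟩⟨x₀x₁| ⊗ diag((−1)^{x₀},(−1)^{x₁},1), and P_accept = Σ_{x₀,x₁}|x₀x₁⟩⟨x₀x₁| ⊗ |x₀x₁⟩⟨x₀x₁|. Its optimal value equals 17/24 = (1/2)·(3/4) + (1/2)·(2/3), attained at σ_B = (1/3)·1_{ℂ³};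 that is, the stochastic switch gives no improvement over the individual optimal cheating probabilities 3/4 and 2/3, since both are achieved simultaneously by the same first message. -/
/-!
Once `σ_B` is fixed the two games decouple, and each is bounded by its own optimum for every `σ_B`.

XOR oblivious transfer: for every `b`, `Σ_x (-1)^{x₀+x₁} U_x(b) = 0`, so the parity vector
`χ = Σ_x (-1)^{x₀+x₁}|x⟩` has zero weight in `Tr_B(U₂(|ψ⟩⟨ψ| ⊗ σ_B)U₂†)`; hence `σ^{OT}` annihilates
every `χ ⊗ |g⟩`. Writing `σ^{OT} = A†A`, each row of `A` is orthogonal to `χ` on each `G`-block, and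
Cauchy–Schwarz bounds the accepted entry `|A_{i,(g,g)}|²` by `3/4` of the weight of its block.

Die rolling: `⟨φ|σ|φ⟩ ≤ σ_{pp,pp} + σ_{qq,qq}` for `φ = (|pp⟩ + |qq⟩)/√2` (add the nonnegative
`(|pp⟩ - |qq⟩)`-term), which is at most `(σ_B)_{pp} + (σ_B)_{qq}`; the three `φ_y` use each diagonal
entry of `σ_B` twice, for a total of `2`.

Both bounds are attained at `σ_B = 1/3`: by a purification of `Tr_B(U₂(|ψ⟩⟨ψ| ⊗ 1/3)U₂†)` and by
the maximally entangled state.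
-/

open Matrix
open scoped Matrix BigOperators ComplexOrder

noncomputable section

/-- Square matrices over ℂ indexed by `α`. -/
abbrev Mat (α : Type) : Type := Matrix α α ℂ

/-- A density matrix: positive semidefinite with unit trace. -/
def IsDensity {α : Type} [Fintype α] [DecidableEq α] (ρ : Mat α) : Prop :=
  ρ.PosSemidef ∧ ρ.trace = 1

/-- Hilbert–Schmidt inner product ⟨P, Q⟩ = Tr(P† Q). -/
def hs {α : Type} [Fintype α] (P Q : Mat α) : ℂ := (Pᴴ * Q).trace

/-- Outer product |v⟩⟨v|. -/
def outer {α : Type} (v : α → ℂ) : Mat α := fun i j => v i * star (v j)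

/-- Standard basis vector |i⟩. -/
def ket {α : Type} [DecidableEq α] (i : α) : α → ℂ := fun j => if j = i then 1 else 0

/-- The embedding of Fin 2 into Fin 3. -/
def f23 (y : Fin 2) : Fin 3 := ⟨y.val, by omega⟩

/-- |φ_y⟩ = (|yy⟩ + |22⟩)/√2 ∈ ℂ³ ⊗ ℂ³. -/
def phi (y : Fin 2) : Fin 3 × Fin 3 → ℂ :=
  fun p => (ket (f23 y, f23 y) p + ket ((2 : Fin 3), (2 : Fin 3)) p) / (Real.sqrt 2 : ℂ)

/-- Partial trace over the first tensor factor. -/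
def ptrA {α β : Type} [Fintype α] (ρ : Mat (α × β)) : Mat β :=
  fun b b' => ∑ a, ρ (a, b) (a, b')

/-- |ψ⟩ = (1/2) Σ_{x₀,x₁} |x₀x₁⟩ ∈ X₀ ⊗ X₁. -/
def psiX : Fin 2 × Fin 2 → ℂ := fun _ => 1/2

/-- U_{x₀x₁} = diag((−1)^{x₀}, (−1)^{x₁}, 1) as a diagonal entry function. -/
def Udiag (x0 x1 : Fin 2) (b : Fin 3) : ℂ :=
  if b = 0 then (-1) ^ (x0 : ℕ) else if b = 1 then (-1) ^ (x1 : ℕ) else 1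

/-- U₂ = Σ_{x₀,x₁} |x₀x₁⟩⟨x₀x₁| ⊗ U_{x₀x₁}, acting on X₀ ⊗ X₁ ⊗ B. -/
def U2 : Mat (Fin 2 × Fin 2 × Fin 3) :=
  Matrix.diagonal fun p => Udiag p.1 p.2.1 p.2.2

/-- The state |ψ⟩⟨ψ| ⊗ σ_B on X₀ ⊗ X₁ ⊗ B. -/
def inState (σB : Mat (Fin 3)) : Mat (Fin 2 × Fin 2 × Fin 3) :=
  fun p q => outer psiX (p.1, p.2.1) (q.1, q.2.1) * σB p.2.2 q.2.2

/-- Partial trace over B, the last factor of X₀ ⊗ X₁ ⊗ B. -/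
def trB (ρ : Mat (Fin 2 × Fin 2 × Fin 3)) : Mat (Fin 2 × Fin 2) :=
  fun p q => ∑ b, ρ (p.1, p.2, b) (q.1, q.2, b)

/-- Partial trace over G₀ and G₁, the last two factors of X₀ ⊗ X₁ ⊗ G₀ ⊗ G₁. -/
def trG01 (σ : Mat (Fin 2 × Fin 2 × Fin 2 × Fin 2)) : Mat (Fin 2 × Fin 2) :=
  fun p q => ∑ g0, ∑ g1, σ (p.1, p.2, g0, g1) (q.1, q.2, g0, g1)

/-- P_accept = Σ_{x₀,x₁} |x₀x₁⟩⟨x₀x₁|_{X₀⊗X₁} ⊗ |x₀x₁⟩⟨x₀x₁|_{G₀⊗G₁}. -/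
def Pacc : Mat (Fin 2 × Fin 2 × Fin 2 × Fin 2) := fun p q =>
  match p, q with
  | (x0, x1, g0, g1), (x0', x1', g0', g1') =>
    ∑ u0 : Fin 2, ∑ u1 : Fin 2,
      ket (u0, u1) (x0, x1) * star (ket (u0, u1) (x0', x1')) *
      (ket (u0, u1) (g0, g1) * star (ket (u0, u1) (g0', g1')))

/-- The constraint Tr_{G₀,G₁}(σ) = Tr_B(U₂(|ψ⟩⟨ψ| ⊗ σ_B)U₂†). -/
def OTconstraint (σ : Mat (Fin 2 × Fin 2 × Fin 2 × Fin 2)) (σB : Mat (Fin 3)) : Prop :=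
  trG01 σ = trB (U2 * inState σB * U2ᴴ)

/-- |φ₀⟩ = (|00⟩+|22⟩)/√2, |φ₁⟩ = (|11⟩+|22⟩)/√2, |φ₂⟩ = (|00⟩+|11⟩)/√2. -/
def phiD (y : Fin 3) : Fin 3 × Fin 3 → ℂ := fun p =>
  if y = 0 then (ket ((0 : Fin 3), (0 : Fin 3)) p + ket ((2 : Fin 3), (2 : Fin 3)) p) / (Real.sqrt 2 : ℂ)
  else if y = 1 then (ket ((1 : Fin 3), (1 : Fin 3)) p + ket ((2 : Fin 3), (2 : Fin 3)) p) / (Real.sqrt 2 : ℂ)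
  else (ket ((0 : Fin 3), (0 : Fin 3)) p + ket ((1 : Fin 3), (1 : Fin 3)) p) / (Real.sqrt 2 : ℂ)

lemma card_mul_norm_sq_le_of_sum_mul_eq_zero {ι 𝕜 : Type*} [Fintype ι] [DecidableEq ι]
    [NormedField 𝕜] {c u : ι → 𝕜} (hc : ∀ x, ‖c x‖ = 1) (h : ∑ x, c x * u x = 0) (a : ι) :
    Fintype.card ι * ‖u a‖ ^ 2 ≤ (Fintype.card ι - 1) * ∑ x, ‖u x‖ ^ 2 := by
  set s := Finset.univ.erase a
  have hcard : (s.card : ℝ) = Fintype.card ι - 1 := by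
    rw [Finset.card_erase_of_mem (Finset.mem_univ a), Finset.card_univ,
      Nat.cast_pred (Fintype.card_pos_iff.mpr ⟨a⟩)]
  have hua : ‖u a‖ ≤ ∑ x ∈ s, ‖u x‖ := by
    have : c a * u a = -∑ x ∈ s, c x * u x := by
      rw [← Finset.add_sum_erase _ _ (Finset.mem_univ a)] at h; linear_combination h
    calc ‖u a‖ = ‖c a * u a‖ := by rw [norm_mul, hc, one_mul]
      _ ≤ ∑ x ∈ s, ‖c x * u x‖ := by rw [this, norm_neg]; exact norm_sum_le _ _
      _ = ∑ x ∈ s, ‖u x‖ := by simp only [norm_mul, hc, one_mul]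
  have hcs : ‖u a‖ ^ 2 ≤ (Fintype.card ι - 1) * ∑ x ∈ s, ‖u x‖ ^ 2 := by
    rw [← hcard]
    exact (pow_le_pow_left₀ (norm_nonneg _) hua 2).trans (sq_sum_le_card_mul_sum_sq ..)
  rw [← Finset.add_sum_erase _ _ (Finset.mem_univ a)]
  linarith

lemma sum_prod_prod_eq_sum_sum {α β γ M : Type*} [Fintype α] [Fintype β] [Fintype γ]
    [AddCommMonoid M] (F : α × β × γ → M) : ∑ p, F p = ∑ c, ∑ ab : α × β, F (ab.1, ab.2, c) := by
  rw [← (Equiv.prodAssoc α β γ).sum_comp, Fintype.sum_prod_type, Finset.sum_comm]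
  rfl

lemma re_conjTranspose_mul_self_apply_self {m n : Type} [Fintype m] (A : Matrix m n ℂ) (p : n) :
    ((Aᴴ * A) p p).re = ∑ i, ‖A i p‖ ^ 2 := by
  simp [mul_apply, Complex.re_sum, ← Complex.normSq_eq_norm_sq, Complex.normSq_apply]

lemma outer_posSemidef {α : Type} [Fintype α] (v : α → ℂ) : (outer v).PosSemidef :=
  posSemidef_vecMulVec_self_star v

lemma outer_trace {α : Type} [Fintype α] (v : α → ℂ) :
    (outer v).trace = ((∑ i, Complex.normSq (v i) : ℝ) : ℂ) := by
  simp only [trace, diag, outer]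
  push_cast
  exact Finset.sum_congr rfl fun i _ => by rw [Complex.star_def, Complex.mul_conj]

lemma hs_outer {α : Type} [Fintype α] (v : α → ℂ) (σ : Mat α) :
    hs (outer v) σ = star v ⬝ᵥ σ *ᵥ v := by
  simp only [hs, trace, diag, mul_apply, conjTranspose_apply, outer, dotProduct, mulVec,
    Pi.star_apply, star_mul', star_star, Finset.mul_sum]
  rw [Finset.sum_comm]
  exact Finset.sum_congr rfl fun _ _ => Finset.sum_congr rfl fun _ _ => by ring

lemma ket_eq_single {α : Type} [DecidableEq α] (i : α) : ket i = Pi.single i (1 : ℂ) := by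
  funext j; simp [ket, Pi.single_apply]

lemma re_dotProduct_mulVec_ket_add_ket_le {α : Type} [Fintype α] [DecidableEq α]
    {σ : Mat α} (hσ : σ.PosSemidef) (p q : α) :
    (star (ket p + ket q) ⬝ᵥ σ *ᵥ (ket p + ket q)).re ≤ 2 * ((σ p p).re + (σ q q).re) := by
  have parallelogram : star (ket p + ket q) ⬝ᵥ σ *ᵥ (ket p + ket q)
      + star (ket p - ket q) ⬝ᵥ σ *ᵥ (ket p - ket q) = 2 * (σ p p + σ q q) := by
    simp only [ket_eq_single, star_add, star_sub, Pi.star_single, star_one, mulVec_add,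
      mulVec_sub, dotProduct_add, add_dotProduct, dotProduct_sub, sub_dotProduct, single_dotProduct,
      mulVec_single_one, one_mul, col_apply]
    ring
  have hdiff := (Complex.le_def.mp (hσ.dotProduct_mulVec_nonneg (ket p - ket q))).1
  have := congrArg Complex.re parallelogram
  simp only [Complex.add_re, Complex.re_ofNat, Complex.mul_re, Complex.im_ofNat, zero_mul,
    sub_zero, Complex.zero_re] at this hdiff
  linarith

lemma re_hs_outer_ket_add_ket_div_sqrt_two_le {α : Type} [Fintype α] [DecidableEq α]
    {σ : Mat α} (hσ : σ.PosSemidef) (p q : α) :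
    (hs (outer fun i => (ket p i + ket q i) / (Real.sqrt 2 : ℂ)) σ).re
      ≤ (σ p p).re + (σ q q).re := by
  have hvec : (fun i => (ket p i + ket q i) / (Real.sqrt 2 : ℂ))
      = ((Real.sqrt 2 : ℂ)⁻¹) • (ket p + ket q) := by
    funext i; simp [div_eq_inv_mul]
  have hhalf : star ((Real.sqrt 2 : ℂ)⁻¹) * (Real.sqrt 2 : ℂ)⁻¹ = 1 / 2 := by
    rw [star_inv₀, Complex.star_def, Complex.conj_ofReal, ← mul_inv, ← Complex.ofReal_mul,
      Real.mul_self_sqrt zero_le_two]; norm_num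
  rw [hvec, hs_outer, star_smul, mulVec_smul, dotProduct_smul, smul_dotProduct, smul_eq_mul,
    smul_eq_mul, ← mul_assoc, mul_comm _ (star _), hhalf]
  rw [show (1 / 2 : ℂ) = ((1 / 2 : ℝ) : ℂ) by norm_num, Complex.re_ofReal_mul]
  linarith [re_dotProduct_mulVec_ket_add_ket_le hσ p q]

lemma re_apply_le_re_ptrA {α β : Type} [Fintype α] [Fintype β]
    {σ : Mat (α × β)} (hσ : σ.PosSemidef) (a : α) (b : β) :
    (σ (a, b) (a, b)).re ≤ (ptrA σ b b).re := by
  rw [ptrA, Complex.re_sum]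
  exact Finset.single_le_sum (f := fun a => (σ (a, b) (a, b)).re)
    (fun a _ => (Complex.le_def.mp hσ.diag_nonneg).1) (Finset.mem_univ a)

lemma re_hs_outer_ket_ket_le_ptrA {α : Type} [Fintype α] [DecidableEq α] {σ : Mat (α × α)}
    (hσ : σ.PosSemidef) (p q : α) :
    (hs (outer fun i => (ket (p, p) i + ket (q, q) i) / (Real.sqrt 2 : ℂ)) σ).re
      ≤ (ptrA σ p p).re + (ptrA σ q q).re :=
  (re_hs_outer_ket_add_ket_div_sqrt_two_le hσ _ _).trans
    (add_le_add (re_apply_le_re_ptrA hσ p p) (re_apply_le_re_ptrA hσ q q))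

def parity (x : Fin 2 × Fin 2) : ℂ := if x.1 = x.2 then 1 else -1

def parityVec (g : Fin 2 × Fin 2) : Fin 2 × Fin 2 × Fin 2 × Fin 2 → ℂ :=
  fun p => if p.2.2 = g then parity (p.1, p.2.1) else 0

lemma sum_parity_mul_Udiag (b : Fin 3) : ∑ x, parity x * Udiag x.1 x.2 b = 0 := by
  fin_cases b <;> simp [parity, Udiag, Fintype.sum_prod_type, Fin.sum_univ_two]

lemma trB_conj_U2_apply (σB : Mat (Fin 3)) (x y : Fin 2 × Fin 2) :
    trB (U2 * inState σB * U2ᴴ) x y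
      = 1 / 4 * ∑ b, Udiag x.1 x.2 b * σB b b * Udiag y.1 y.2 b := by
  have hreal : ∀ x0 x1 b, star (Udiag x0 x1 b) = Udiag x0 x1 b := by
    intro x0 x1 b; simp only [Udiag]; split_ifs <;> simp
  simp only [trB, U2, inState, outer, psiX, diagonal_conjTranspose, diagonal_mul, mul_diagonal,
    Pi.star_apply, hreal, Finset.mul_sum]
  exact Finset.sum_congr rfl fun _ _ => by norm_num; ring

lemma sum_parity_mul_trB_conj_U2 (σB : Mat (Fin 3)) :
    ∑ x, ∑ y, parity x * parity y * trB (U2 * inState σB * U2ᴴ) x y = 0 := by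
  have hterm : ∀ x y, parity x * parity y * trB (U2 * inState σB * U2ᴴ) x y
      = 1 / 4 * ∑ b, σB b b * ((parity x * Udiag x.1 x.2 b) * (parity y * Udiag y.1 y.2 b)) := by
    intro x y
    rw [trB_conj_U2_apply, Finset.mul_sum, Finset.mul_sum, Finset.mul_sum]
    exact Finset.sum_congr rfl fun _ _ => by ring
  calc ∑ x, ∑ y, parity x * parity y * trB (U2 * inState σB * U2ᴴ) x y
      = 1 / 4 * ∑ b, σB b b * ((∑ x, parity x * Udiag x.1 x.2 b)
          * (∑ y, parity y * Udiag y.1 y.2 b)) := by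
        simp only [hterm, Finset.mul_sum, Finset.sum_mul]
        rw [Finset.sum_comm]
        exact (Finset.sum_congr rfl fun _ _ => Finset.sum_comm).trans Finset.sum_comm
    _ = 0 := by simp [sum_parity_mul_Udiag]

lemma sum_dotProduct_parityVec (σ : Mat (Fin 2 × Fin 2 × Fin 2 × Fin 2)) :
    ∑ g, star (parityVec g) ⬝ᵥ σ *ᵥ parityVec g
      = ∑ x, ∑ y, parity x * parity y * trG01 σ x y := by
  simp only [dotProduct, mulVec, parityVec, parity, trG01, Pi.star_apply,
    Fintype.sum_prod_type, Fin.sum_univ_two]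
  norm_num [Prod.ext_iff, Fin.ext_iff]
  ring

lemma mulVec_parityVec_eq_zero {σ : Mat (Fin 2 × Fin 2 × Fin 2 × Fin 2)} {σB : Mat (Fin 3)}
    (hσ : σ.PosSemidef) (hcon : OTconstraint σ σB) (g : Fin 2 × Fin 2) :
    σ *ᵥ parityVec g = 0 := by
  have hsum : ∑ g, star (parityVec g) ⬝ᵥ σ *ᵥ parityVec g = 0 := by
    rw [sum_dotProduct_parityVec, hcon, sum_parity_mul_trB_conj_U2]
  refine (hσ.dotProduct_mulVec_zero_iff _).mp ?_
  exact (Finset.sum_eq_zero_iff_of_nonneg fun g _ => hσ.dotProduct_mulVec_nonneg _).mp hsum g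
    (Finset.mem_univ g)

lemma mulVec_parityVec_apply {m : Type} [Fintype m]
    (A : Matrix m (Fin 2 × Fin 2 × Fin 2 × Fin 2) ℂ) (g : Fin 2 × Fin 2) (i : m) :
    (A *ᵥ parityVec g) i = ∑ x, parity x * A i (x.1, x.2, g) := by
  simp [mulVec, dotProduct, parityVec, sum_prod_prod_eq_sum_sum, mul_comm]

lemma hs_Pacc (M : Mat (Fin 2 × Fin 2 × Fin 2 × Fin 2)) :
    hs M Pacc = ∑ g : Fin 2 × Fin 2, star (M (g.1, g.2, g) (g.1, g.2, g)) := by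
  simp [hs, trace, mul_apply, Pacc, ket, Fintype.sum_prod_type, Fin.sum_univ_two, Prod.ext_iff]

lemma re_hs_Pacc_le {σ : Mat (Fin 2 × Fin 2 × Fin 2 × Fin 2)} (hσ : IsDensity σ)
    (hker : ∀ g, σ *ᵥ parityVec g = 0) : (hs σ Pacc).re ≤ 3 / 4 := by
  obtain ⟨A, rfl⟩ : ∃ A : Mat (Fin 2 × Fin 2 × Fin 2 × Fin 2), σ = Aᴴ * A := by
    open scoped MatrixOrder in
    exact CStarAlgebra.nonneg_iff_eq_star_mul_self.mp hσ.1.nonneg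
  have hrow : ∀ g i, ∑ x, parity x * A i (x.1, x.2, g) = 0 := by
    intro g i
    have h : star (A *ᵥ parityVec g) ⬝ᵥ A *ᵥ parityVec g = 0 := by
      rw [star_mulVec, ← dotProduct_mulVec, mulVec_mulVec, hker, dotProduct_zero]
    rw [← mulVec_parityVec_apply, dotProduct_star_self_eq_zero.mp h, Pi.zero_apply]
  have hparity : ∀ x, ‖parity x‖ = 1 := fun x => by unfold parity; split_ifs <;> simp
  have htrace : ∑ p, ∑ i, ‖A i p‖ ^ 2 = 1 := by
    simp only [← re_conjTranspose_mul_self_apply_self, ← Complex.re_sum]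
    exact congrArg Complex.re hσ.2
  calc (hs (Aᴴ * A) Pacc).re = ∑ g : Fin 2 × Fin 2, ∑ i, ‖A i (g.1, g.2, g)‖ ^ 2 := by
        simp only [hs_Pacc, Complex.re_sum, Complex.star_def, Complex.conj_re,
          re_conjTranspose_mul_self_apply_self]
    _ ≤ ∑ g : Fin 2 × Fin 2, ∑ i, 3 / 4 * ∑ x : Fin 2 × Fin 2, ‖A i (x.1, x.2, g)‖ ^ 2 := by
        gcongr with g _ i _
        have := card_mul_norm_sq_le_of_sum_mul_eq_zero hparity (hrow g i) g
        norm_num at this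
        linarith
    _ = 3 / 4 * ∑ p, ∑ i, ‖A i p‖ ^ 2 := by
        simp only [sum_prod_prod_eq_sum_sum fun p => ∑ i, ‖A i p‖ ^ 2, Finset.mul_sum]
        exact Finset.sum_congr rfl fun _ _ => Finset.sum_comm
    _ = 3 / 4 := by rw [htrace, mul_one]

lemma re_sum_hs_phiD_le {σ0 σ1 σ2 : Mat (Fin 3 × Fin 3)} {σB : Mat (Fin 3)}
    (hσB : σB.trace = 1) (h0 : σ0.PosSemidef) (h1 : σ1.PosSemidef) (h2 : σ2.PosSemidef)
    (hp0 : ptrA σ0 = σB) (hp1 : ptrA σ1 = σB) (hp2 : ptrA σ2 = σB) :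
    (hs (outer (phiD 0)) σ0).re + (hs (outer (phiD 1)) σ1).re + (hs (outer (phiD 2)) σ2).re
      ≤ 2 := by
  have b0 : (hs (outer (phiD 0)) σ0).re ≤ _ := re_hs_outer_ket_ket_le_ptrA h0 0 2
  have b1 : (hs (outer (phiD 1)) σ1).re ≤ _ := re_hs_outer_ket_ket_le_ptrA h1 1 2
  have b2 : (hs (outer (phiD 2)) σ2).re ≤ _ := re_hs_outer_ket_ket_le_ptrA h2 0 1
  have htr : (σB 0 0).re + (σB 1 1).re + (σB 2 2).re = 1 := by
    simpa [trace, Fin.sum_univ_three] using congrArg Complex.re hσB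
  rw [hp0] at b0
  rw [hp1] at b1
  rw [hp2] at b2
  linarith

lemma sqrt_three_sq : Real.sqrt 3 ^ 2 = 3 := Real.sq_sqrt (by norm_num)

/-- The purification `Σ_{x,b} U_x(b) |x⟩|b⟩ / (2√3)` of `Tr_B(U₂(|ψ⟩⟨ψ| ⊗ 1/3)U₂†)`, with `|b⟩`
sent to the orthonormal vectors `Σ_g (-1)^{g₀}|g⟩/2`, `Σ_g (-1)^{g₁}|g⟩/2`, `Σ_g |g⟩/2` of
`G₀ ⊗ G₁`. -/
def otCheatVec (p : Fin 2 × Fin 2 × Fin 2 × Fin 2) : ℂ :=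
  (((if p.1 = p.2.2.1 then 1 else -1) + (if p.2.1 = p.2.2.2 then 1 else -1) + 1 : ℝ)
    * Real.sqrt 3 / 12 : ℝ)

def maxEntangled (p : Fin 3 × Fin 3) : ℂ := ((if p.1 = p.2 then Real.sqrt 3 / 3 else 0 : ℝ) : ℂ)

lemma isDensity_outer_otCheatVec : IsDensity (outer otCheatVec) := by
  refine ⟨outer_posSemidef _, ?_⟩
  rw [outer_trace, Complex.ofReal_eq_one]
  simp only [otCheatVec, Fintype.sum_prod_type, Fin.sum_univ_two, Complex.normSq_ofReal]
  norm_num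
  ring_nf
  norm_num [sqrt_three_sq]

lemma isDensity_outer_maxEntangled : IsDensity (outer maxEntangled) := by
  refine ⟨outer_posSemidef _, ?_⟩
  rw [outer_trace, Complex.ofReal_eq_one]
  simp only [maxEntangled, Fintype.sum_prod_type, Fin.sum_univ_three, Complex.normSq_ofReal]
  norm_num [Fin.ext_iff]
  ring_nf
  norm_num [sqrt_three_sq]

lemma isDensity_maximallyMixed : IsDensity ((1 / 3 : ℂ) • (1 : Mat (Fin 3))) := by
  refine ⟨?_, by simp [trace_smul]⟩
  rw [smul_one_eq_diagonal]
  exact PosSemidef.diagonal fun _ => by norm_num [Complex.le_def]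

lemma otConstraint_otCheatVec : OTconstraint (outer otCheatVec) ((1 / 3 : ℂ) • 1) := by
  unfold OTconstraint
  ext ⟨a, b⟩ ⟨c, d⟩
  fin_cases a <;> fin_cases b <;> fin_cases c <;> fin_cases d <;>
  · simp only [trG01, trB, U2, inState, psiX, outer, Udiag, otCheatVec,
      diagonal_conjTranspose, diagonal_mul, mul_diagonal,
      Matrix.smul_apply, Matrix.one_apply, Fin.sum_univ_two, Fin.sum_univ_three, Pi.star_apply]
    norm_num [Fin.ext_iff]
    ring_nf
    norm_num [← Complex.ofReal_pow, sqrt_three_sq]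

lemma ptrA_outer_maxEntangled : ptrA (outer maxEntangled) = (1 / 3 : ℂ) • 1 := by
  ext b b'
  fin_cases b <;> fin_cases b' <;>
  · simp only [ptrA, outer, maxEntangled, Fin.sum_univ_three, Matrix.smul_apply, Matrix.one_apply]
    norm_num [Fin.ext_iff]
    all_goals (ring_nf; norm_num [← Complex.ofReal_pow, sqrt_three_sq])

lemma hs_outer_otCheatVec_Pacc : hs (outer otCheatVec) Pacc = 3 / 4 := by
  rw [hs_Pacc]
  simp only [outer, otCheatVec, Fintype.sum_prod_type, Fin.sum_univ_two]
  norm_num [Fin.ext_iff]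
  all_goals (ring_nf; norm_num [← Complex.ofReal_pow, sqrt_three_sq])

lemma hs_outer_phiD_maxEntangled (y : Fin 3) :
    hs (outer (phiD y)) (outer maxEntangled) = 2 / 3 := by
  rw [hs_outer]
  fin_cases y <;>
  · simp only [dotProduct, mulVec, outer, phiD, ket, maxEntangled, Fintype.sum_prod_type,
      Fin.sum_univ_three, Pi.star_apply]
    norm_num [Fin.ext_iff, Prod.ext_iff]
    all_goals (ring_nf; norm_num [← Complex.ofReal_pow, sqrt_three_sq, Complex.ext_iff])

lemma re_objective_witness :
    ((1 / 2 : ℂ) * hs (outer otCheatVec) Pacc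
      + (1 / 2 : ℂ) * (1 / 3 : ℂ) * (hs (outer (phiD 0)) (outer maxEntangled)
        + hs (outer (phiD 1)) (outer maxEntangled) + hs (outer (phiD 2)) (outer maxEntangled))).re
      = 17 / 24 := by
  rw [hs_outer_otCheatVec_Pacc, hs_outer_phiD_maxEntangled, hs_outer_phiD_maxEntangled,
    hs_outer_phiD_maxEntangled]
  norm_num

theorem xot_dr_switch_cheating_Alice :
    IsGreatest
      {x : ℝ | ∃ (σOT : Mat (Fin 2 × Fin 2 × Fin 2 × Fin 2)) (σB : Mat (Fin 3))
          (σ0 σ1 σ2 : Mat (Fin 3 × Fin 3)),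
        IsDensity σOT ∧ IsDensity σB ∧
        IsDensity σ0 ∧ IsDensity σ1 ∧ IsDensity σ2 ∧
        OTconstraint σOT σB ∧
        ptrA σ0 = σB ∧ ptrA σ1 = σB ∧ ptrA σ2 = σB ∧
        x = ((1/2 : ℂ) * hs σOT Pacc
            + (1/2 : ℂ) * (1/3 : ℂ) * (hs (outer (phiD 0)) σ0
              + hs (outer (phiD 1)) σ1 + hs (outer (phiD 2)) σ2)).re}
      (17/24)
    ∧ (17/24 : ℝ) = (1/2) * (3/4) + (1/2) * (2/3)
    ∧ ∃ (σOT : Mat (Fin 2 × Fin 2 × Fin 2 × Fin 2)) (σB : Mat (Fin 3))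
        (σ0 σ1 σ2 : Mat (Fin 3 × Fin 3)),
        IsDensity σOT ∧ IsDensity σB ∧
        IsDensity σ0 ∧ IsDensity σ1 ∧ IsDensity σ2 ∧
        OTconstraint σOT σB ∧
        ptrA σ0 = σB ∧ ptrA σ1 = σB ∧ ptrA σ2 = σB ∧
        σB = (1/3 : ℂ) • (1 : Mat (Fin 3)) ∧
        ((1/2 : ℂ) * hs σOT Pacc
          + (1/2 : ℂ) * (1/3 : ℂ) * (hs (outer (phiD 0)) σ0
            + hs (outer (phiD 1)) σ1 + hs (outer (phiD 2)) σ2)).re = 17/24 := by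
  refine ⟨⟨?_, ?_⟩, by norm_num, ?_⟩
  · exact ⟨outer otCheatVec, (1 / 3 : ℂ) • 1, outer maxEntangled, outer maxEntangled,
      outer maxEntangled, isDensity_outer_otCheatVec, isDensity_maximallyMixed,
      isDensity_outer_maxEntangled, isDensity_outer_maxEntangled, isDensity_outer_maxEntangled,
      otConstraint_otCheatVec, ptrA_outer_maxEntangled, ptrA_outer_maxEntangled,
      ptrA_outer_maxEntangled, re_objective_witness.symm⟩
  · rintro x ⟨σOT, σB, σ0, σ1, σ2, hOT, hB, h0, h1, h2, hcon, hp0, hp1, hp2, rfl⟩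
    have hot := re_hs_Pacc_le hOT (mulVec_parityVec_eq_zero hOT.1 hcon)
    have hdr := re_sum_hs_phiD_le hB.2 h0.1 h1.1 h2.1 hp0 hp1 hp2
    simp only [Complex.add_re, Complex.mul_re]
    norm_num
    linarith
  · exact ⟨outer otCheatVec, (1 / 3 : ℂ) • 1, outer maxEntangled, outer maxEntangled,
      outer maxEntangled, isDensity_outer_otCheatVec, isDensity_maximallyMixed,
      isDensity_outer_maxEntangled, isDensity_outer_maxEntangled, isDensity_outer_maxEntangled,
      otConstraint_otCheatVec, ptrA_outer_maxEntangled, ptrA_outer_maxEntangled,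
      ptrA_outer_maxEntangled, rfl, re_objective_witness⟩

end
end

section
/- The optimal value of the following semidefinite program equals 1; i.e., Bob can cheat perfectly in the stochastic-switch strong coin flipping protocol: maximize ⟨τ, Q'⟩ over density matrices τ₀ on C ⊗ Y ⊗ A₀ ⊗ A₁ ⊗ B₁ ⊗ G = ℂ² ⊗ ℂ² ⊗ ℂ³ ⊗ ℂ³ ⊗ ℂ³ ⊗ ℂ² and τ on C ⊗ Y ⊗ A₀ ⊗ A₁ ⊗ Z ⊗ G = ℂ² ⊗ ℂ² ⊗ ℂ³ ⊗ ℂ³ ⊗ ℂ² ⊗ ℂ², subject to Tr_{C,G}(τ₀) = Tr_{B₀}(|ψ⟩⟨ψ|) and Tr_Z(τ) = Tr_{B₁}(τ₀), where |ψ⟩ = Σ_{y∈{0,1}} (1/√2)|y⟩_Y ⊗ |φ_y⟩_{A₀⊗B₀} ⊗ |φ_y⟩_{A₁⊗B₁}, and Q' = |0⟩⟨0|_C ⊗ Σ_{y∈{0,1}} |y⟩⟨y|_Y ⊗ 1_{A₀} ⊗ 1_{A₁} ⊗ 1_Z ⊗ |y⟩⟨y|_G + |1⟩⟨1|_C ⊗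 [1_Y ⊗ 1_{A₀} ⊗ |2⟩⟨2|_{A₁} ⊗ |0⟩⟨0|_Z ⊗ 1_G + 1_Y ⊗ |2⟩⟨2|_{A₀} ⊗ 1_{A₁} ⊗ |1⟩⟨1|_Z ⊗ 1_G]. In particular, there exist feasible τ₀, τ with ⟨τ, Q'⟩ = 1 (Bob measures the received qutrit in the computational basis and, conditioned on the outcome, either learns y perfectly in the commitment branch or forces outcome 1 in the weak-coin-flipping branch). -/
/-! STATEMENT 18: In the stochastic-switch strong coin flipping protocol, Bob can cheat perfectly: the optimal value of his cheating SDP equals 1, and it is attained. -/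

open Matrix
open scoped Matrix BigOperators ComplexOrder

noncomputable section

/-- The choice register C. -/
abbrev CI : Type := Fin 2

/-- Index for Y ⊗ A₀ ⊗ B₀ ⊗ A₁ ⊗ B₁. -/
abbrev I5 : Type := Fin 2 × Fin 3 × Fin 3 × Fin 3 × Fin 3

/-- |ψ⟩ = Σ_y (1/√2)|y⟩_Y ⊗ |φ_y⟩_{A₀⊗B₀} ⊗ |φ_y⟩_{A₁⊗B₁}. -/
def psiW : I5 → ℂ := fun p =>
  match p with
  | (y, a0, b0, a1, b1) => phi y (a0, b0) * phi y (a1, b1) / (Real.sqrt 2 : ℂ)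

/-- Partial trace over B₀, onto Y ⊗ A₀ ⊗ A₁ ⊗ B₁. -/
def trB0 (ρ : Mat I5) : Mat (Fin 2 × Fin 3 × Fin 3 × Fin 3) :=
  fun p q => ∑ b0,
    ρ (p.1, p.2.1, b0, p.2.2.1, p.2.2.2) (q.1, q.2.1, b0, q.2.2.1, q.2.2.2)

/-- Partial trace over C and G, the outer factors of C ⊗ Y ⊗ A₀ ⊗ A₁ ⊗ B₁ ⊗ G. -/
def trCG (τ : Mat (CI × Fin 2 × Fin 3 × Fin 3 × Fin 3 × Fin 2)) :
    Mat (Fin 2 × Fin 3 × Fin 3 × Fin 3) :=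
  fun p q => ∑ c, ∑ g,
    τ (c, p.1, p.2.1, p.2.2.1, p.2.2.2, g) (c, q.1, q.2.1, q.2.2.1, q.2.2.2, g)

/-- Partial trace over B₁, the fifth factor of C ⊗ Y ⊗ A₀ ⊗ A₁ ⊗ B₁ ⊗ G. -/
def trB1' (τ : Mat (CI × Fin 2 × Fin 3 × Fin 3 × Fin 3 × Fin 2)) :
    Mat (CI × Fin 2 × Fin 3 × Fin 3 × Fin 2) :=
  fun p q => ∑ b1,
    τ (p.1, p.2.1, p.2.2.1, p.2.2.2.1, b1, p.2.2.2.2)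
      (q.1, q.2.1, q.2.2.1, q.2.2.2.1, b1, q.2.2.2.2)

/-- Partial trace over Z, the fifth factor of C ⊗ Y ⊗ A₀ ⊗ A₁ ⊗ Z ⊗ G. -/
def trZ (τ : Mat (CI × Fin 2 × Fin 3 × Fin 3 × Fin 2 × Fin 2)) :
    Mat (CI × Fin 2 × Fin 3 × Fin 3 × Fin 2) :=
  fun p q => ∑ z,
    τ (p.1, p.2.1, p.2.2.1, p.2.2.2.1, z, p.2.2.2.2)
      (q.1, q.2.1, q.2.2.1, q.2.2.2.1, z, q.2.2.2.2)

/-- Q' = |0⟩⟨0|_C ⊗ Σ_y |y⟩⟨y|_Y ⊗ 1_{A₀} ⊗ 1_{A₁} ⊗ 1_Z ⊗ |y⟩⟨y|_G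
       + |1⟩⟨1|_C ⊗ [1_Y ⊗ 1_{A₀} ⊗ |2⟩⟨2|_{A₁} ⊗ |0⟩⟨0|_Z ⊗ 1_G
                   + 1_Y ⊗ |2⟩⟨2|_{A₀} ⊗ 1_{A₁} ⊗ |1⟩⟨1|_Z ⊗ 1_G]. -/
def Qscf : Mat (CI × Fin 2 × Fin 3 × Fin 3 × Fin 2 × Fin 2) := fun p q =>
  match p, q with
  | (c, y, a0, a1, z, g), (c', y', a0', a1', z', g') =>
    ket (0 : CI) c * star (ket (0 : CI) c') *
      (∑ u : Fin 2, ket u y * star (ket u y') *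
        (if a0 = a0' then 1 else 0) * (if a1 = a1' then 1 else 0) *
        (if z = z' then 1 else 0) * (ket u g * star (ket u g')))
    + ket (1 : CI) c * star (ket (1 : CI) c') *
      ((if y = y' then 1 else 0) * (if a0 = a0' then 1 else 0) *
        (ket (2 : Fin 3) a1 * star (ket (2 : Fin 3) a1')) *
        (ket (0 : Fin 2) z * star (ket (0 : Fin 2) z')) * (if g = g' then 1 else 0)
      + (if y = y' then 1 else 0) *
        (ket (2 : Fin 3) a0 * star (ket (2 : Fin 3) a0')) *
        (if a1 = a1' then 1 else 0) *
        (ket (1 : Fin 2) z * star (ket (1 : Fin 2) z')) * (if g = g' then 1 else 0))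


/-! Bob measures his half `B₀` of `|ψ⟩` in the computational basis. On outcome `b₀ ∈ {0, 1}`
he knows `y = b₀`, so he opens the commitment branch `c = 0` and guesses `g = b₀`; on outcome `2`
Alice's qutrit `A₀` is in `|2⟩` too, so he chooses `c = 1` and announces `z = 1`. Measuring `B₀`
is invisible once `B₀` is traced out, and copying the now classical `C` into `Z` does not disturb
it, so both constraints hold; since `|ψ⟩` is supported on `a₀ = b₀ ∈ {y, 2}`, all the weight of the final state lies on configurations where Bob wins.
Conversely `Q'` is a diagonal `0/1` matrix, so `⟨τ, Q'⟩ ≤ Tr τ = 1`. -/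

open Complex

lemma mul_conjTranspose_self_apply_self {α β : Type} [Fintype β] (A : Matrix α β ℂ) (i : α) :
    (A * Aᴴ) i i = ∑ b, (normSq (A i b) : ℂ) := by
  simp [mul_apply, mul_conj]

section HilbertSchmidt

variable {α β : Type} [Fintype α] [DecidableEq α] [Fintype β]

lemma hs_diagonal (P : Mat α) (d : α → ℂ) : hs P (diagonal d) = ∑ j, star (P j j) * d j := by
  simp [hs, trace, mul_diagonal]

lemma re_hs_diagonal_le_re_trace {τ : Mat α} (hτ : τ.PosSemidef) {d : α → ℝ}
    (hd : ∀ j, d j ≤ 1) : (hs τ (diagonal fun j => (d j : ℂ))).re ≤ τ.trace.re := by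
  rw [hs_diagonal, trace, re_sum, re_sum]
  refine Finset.sum_le_sum fun j _ => ?_
  have hre : 0 ≤ (τ j j).re := (le_def.mp hτ.diag_nonneg).1
  rw [← hτ.1.apply j j, star_star, re_mul_ofReal, diag_apply]
  nlinarith [hd j]

lemma isDensity_mul_conjTranspose_self {A : Matrix α β ℂ}
    (hA : ∑ i, ∑ b, normSq (A i b) = 1) : IsDensity (A * Aᴴ) := by
  refine ⟨posSemidef_self_mul_conjTranspose A, ?_⟩
  simp [trace, mul_conjTranspose_self_apply_self, ← ofReal_sum, hA]

lemma re_hs_mul_conjTranspose_self_diagonal (A : Matrix α β ℂ) (d : α → ℝ) :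
    (hs (A * Aᴴ) (diagonal fun j => (d j : ℂ))).re = ∑ i, ∑ b, d i * normSq (A i b) := by
  simp [hs_diagonal, mul_conjTranspose_self_apply_self, Finset.mul_sum, mul_comm]

end HilbertSchmidt

section MeasureB0

variable (ψ : I5 → ℂ) (cb gb : Fin 3 → Fin 2)

/-- Purification of `τ₀ = A A†`, the column index being the outcome `b₀` of measuring `B₀`:
Bob writes the branch `cb b₀` into `C` and the guess `gb b₀` into `G`. -/
def measureB0Amp : Matrix (CI × Fin 2 × Fin 3 × Fin 3 × Fin 3 × Fin 2) (Fin 3) ℂ :=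
  fun ⟨c, y, a0, a1, b1, g⟩ b0 => if c = cb b0 ∧ g = gb b0 then ψ (y, a0, b0, a1, b1) else 0

/-- Purification of `τ`, indexed by `(b₀, b₁)`: Bob copies the branch `c` into `Z`. -/
def copyBranchAmp : Matrix (CI × Fin 2 × Fin 3 × Fin 3 × Fin 2 × Fin 2) (Fin 3 × Fin 3) ℂ :=
  fun ⟨c, y, a0, a1, z, g⟩ ⟨b0, b1⟩ =>
    if z = c ∧ c = cb b0 ∧ g = gb b0 then ψ (y, a0, b0, a1, b1) else 0

def recordedIndex : I5 → CI × Fin 2 × Fin 3 × Fin 3 × Fin 2 × Fin 2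
  | (y, a0, b0, a1, _) => (cb b0, y, a0, a1, cb b0, gb b0)

lemma trCG_measureB0Amp :
    trCG (measureB0Amp ψ cb gb * (measureB0Amp ψ cb gb)ᴴ) = trB0 (outer ψ) := by
  funext ⟨y, a0, a1, b1⟩ ⟨y', a0', a1', b1'⟩
  simp only [trCG, trB0, outer, mul_apply, conjTranspose_apply, measureB0Amp]
  simp_rw [Finset.sum_comm (t := (Finset.univ : Finset (Fin 3)))]
  refine Finset.sum_congr rfl fun b0 _ => ?_
  simp [apply_ite star, ite_and]

lemma trZ_copyBranchAmp :
    trZ (copyBranchAmp ψ cb gb * (copyBranchAmp ψ cb gb)ᴴ) =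
      trB1' (measureB0Amp ψ cb gb * (measureB0Amp ψ cb gb)ᴴ) := by
  funext ⟨c, y, a0, a1, g⟩ ⟨c', y', a0', a1', g'⟩
  simp only [trZ, trB1', mul_apply, conjTranspose_apply, measureB0Amp, copyBranchAmp,
    Fintype.sum_prod_type]
  simp_rw [Finset.sum_comm (s := (Finset.univ : Finset (Fin 2)))]
  rw [Finset.sum_comm]
  refine Finset.sum_congr rfl fun b1 _ => Finset.sum_congr rfl fun b0 _ => ?_
  rcases eq_or_ne c c' with rfl | hc
  · simp [ite_and]
  · -- distinct branches are never recorded for the same outcome `b₀`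
    by_cases h : c = cb b0
    · subst h
      simp [hc.symm]
    · simp [h]

lemma sum_normSq_measureB0Amp :
    ∑ p, ∑ b0, normSq (measureB0Amp ψ cb gb p b0) = ∑ i, normSq (ψ i) := by
  rw [← Fintype.sum_prod_type']
  symm
  refine Fintype.sum_of_injective
    (fun i => ((cb i.2.2.1, i.1, i.2.1, i.2.2.2.1, i.2.2.2.2, gb i.2.2.1), i.2.2.1)) ?_ _ _ ?_ ?_
  · rintro ⟨y, a0, b0, a1, b1⟩ ⟨y', a0', b0', a1', b1'⟩ h
    simp_all
  · rintro ⟨⟨c, y, a0, a1, b1, g⟩, b0⟩ h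
    simp only [measureB0Amp]
    rw [if_neg, map_zero]
    rintro ⟨rfl, rfl⟩
    exact h ⟨(y, a0, b0, a1, b1), rfl⟩
  · rintro ⟨y, a0, b0, a1, b1⟩
    simp [measureB0Amp]

lemma sum_mul_normSq_copyBranchAmp (w : CI × Fin 2 × Fin 3 × Fin 3 × Fin 2 × Fin 2 → ℝ) :
    ∑ j, ∑ b, w j * normSq (copyBranchAmp ψ cb gb j b) =
      ∑ i, w (recordedIndex cb gb i) * normSq (ψ i) := by
  rw [← Fintype.sum_prod_type']
  symm
  refine Fintype.sum_of_injective (fun i => (recordedIndex cb gb i, (i.2.2.1, i.2.2.2.2))) ?_ _ _ ?_ ?_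
  · rintro ⟨y, a0, b0, a1, b1⟩ ⟨y', a0', b0', a1', b1'⟩ h
    simp_all [recordedIndex]
  · rintro ⟨⟨c, y, a0, a1, z, g⟩, b0, b1⟩ h
    simp only [copyBranchAmp]
    rw [if_neg, map_zero, mul_zero]
    rintro ⟨rfl, rfl, rfl⟩
    exact h ⟨(y, a0, b0, a1, b1), rfl⟩
  · rintro ⟨y, a0, b0, a1, b1⟩
    simp [copyBranchAmp, recordedIndex]

lemma sum_normSq_copyBranchAmp :
    ∑ j, ∑ b, normSq (copyBranchAmp ψ cb gb j b) = ∑ i, normSq (ψ i) := by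
  simpa using sum_mul_normSq_copyBranchAmp ψ cb gb 1

end MeasureB0

def BobWins : CI × Fin 2 × Fin 3 × Fin 3 × Fin 2 × Fin 2 → Prop
  | (c, y, a0, a1, z, g) => (c = 0 ∧ g = y) ∨ (c = 1 ∧ (a1 = 2 ∧ z = 0 ∨ a0 = 2 ∧ z = 1))

instance : DecidablePred BobWins := fun _ => by unfold BobWins; infer_instance

lemma Qscf_eq_diagonal : Qscf = diagonal fun j => ((if BobWins j then 1 else 0 : ℝ) : ℂ) := by
  ext ⟨c, y, a0, a1, z, g⟩ ⟨c', y', a0', a1', z', g'⟩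
  simp only [Qscf, ket, diagonal_apply, BobWins, Prod.mk.injEq, Fin.sum_univ_two, apply_ite star,
    star_one, star_zero]
  fin_cases c <;> fin_cases c' <;> fin_cases z <;> fin_cases z' <;>
    simp [apply_ite ((↑) : ℝ → ℂ)] <;> grind

lemma re_hs_Qscf_le_one {τ : Mat (CI × Fin 2 × Fin 3 × Fin 3 × Fin 2 × Fin 2)}
    (hτ : IsDensity τ) : (hs τ Qscf).re ≤ 1 := by
  rw [Qscf_eq_diagonal]
  simpa [hτ.2] using re_hs_diagonal_le_re_trace hτ.1 fun j => by split_ifs <;> norm_num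

def bobBranch (b0 : Fin 3) : Fin 2 := if b0 = 2 then 1 else 0

def bobGuess (b0 : Fin 3) : Fin 2 := if b0 = 1 then 1 else 0

lemma eq_and_of_phi_ne_zero {y : Fin 2} {a b : Fin 3} (h : phi y (a, b) ≠ 0) :
    a = b ∧ (a = f23 y ∨ a = 2) := by
  fin_cases y <;> fin_cases a <;> fin_cases b <;> simp_all [phi, ket, f23]

lemma bobWins_recordedIndex {i : I5} (h : psiW i ≠ 0) :
    BobWins (recordedIndex bobBranch bobGuess i) := by
  obtain ⟨y, a0, b0, a1, b1⟩ := i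
  have hphi : phi y (a0, b0) ≠ 0 := fun h0 => h (by simp [psiW, h0])
  obtain ⟨rfl, rfl | rfl⟩ := eq_and_of_phi_ne_zero hphi
  · fin_cases y <;> simp [BobWins, recordedIndex, bobBranch, bobGuess, f23]
  · simp [BobWins, recordedIndex, bobBranch]

lemma sum_normSq_phi (y : Fin 2) : ∑ p, normSq (phi y p) = 1 := by
  fin_cases y <;> simp [Fintype.sum_prod_type, Fin.sum_univ_three, phi, ket, f23] <;> norm_num

lemma sum_normSq_psiW : ∑ i, normSq (psiW i) = 1 :=
  calc ∑ i, normSq (psiW i)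
      = ∑ y : Fin 2, ∑ p : Fin 3 × Fin 3, ∑ q : Fin 3 × Fin 3,
          normSq (phi y p) * normSq (phi y q) / 2 := by
        simp [Fintype.sum_prod_type, psiW]
    _ = 1 := by simp [← Finset.sum_div, ← Finset.mul_sum, sum_normSq_phi]

lemma re_hs_copyBranchAmp_Qscf :
    (hs (copyBranchAmp psiW bobBranch bobGuess * (copyBranchAmp psiW bobBranch bobGuess)ᴴ)
      Qscf).re = 1 := by
  rw [Qscf_eq_diagonal, re_hs_mul_conjTranspose_self_diagonal, sum_mul_normSq_copyBranchAmp]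
  conv_rhs => rw [← sum_normSq_psiW]
  refine Finset.sum_congr rfl fun i _ => ?_
  by_cases h : psiW i = 0
  · simp [h]
  · simp [bobWins_recordedIndex h]

theorem scf_switch_cheating_Bob_perfect :
    IsGreatest
      {x : ℝ | ∃ (τ0 : Mat (CI × Fin 2 × Fin 3 × Fin 3 × Fin 3 × Fin 2))
          (τ : Mat (CI × Fin 2 × Fin 3 × Fin 3 × Fin 2 × Fin 2)),
        IsDensity τ0 ∧ IsDensity τ ∧
        trCG τ0 = trB0 (outer psiW) ∧
        trZ τ = trB1' τ0 ∧
        x = (hs τ Qscf).re}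
      1 := by
  set A := measureB0Amp psiW bobBranch bobGuess
  set B := copyBranchAmp psiW bobBranch bobGuess
  refine ⟨⟨A * Aᴴ, B * Bᴴ, ?_, ?_, trCG_measureB0Amp _ _ _, trZ_copyBranchAmp _ _ _,
    re_hs_copyBranchAmp_Qscf.symm⟩, ?_⟩
  · exact isDensity_mul_conjTranspose_self (by rw [sum_normSq_measureB0Amp, sum_normSq_psiW])
  · exact isDensity_mul_conjTranspose_self (by rw [sum_normSq_copyBranchAmp, sum_normSq_psiW])
  · rintro x ⟨τ0, τ, -, hτ, -, -, rfl⟩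
    exact re_hs_Qscf_le_one hτ

end
end
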